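/- In the setting B(w,v) = A(w,v) - J(w,v) + α·J(v,w) + P(w,v) with A(w,w) = |||w|||²_T, P(w,w) ≥ β·p(w) for seminorm-squared p, and |J(w,v)| ≤ M·|||w|||_T·(p(v))^{1/2}: for any α ∈ ℝ and any η > 0, B(w,w) ≥ (1 - M|1-α|η/2)·|||w|||²_T + (β - M|1-α|/(2η))·p(w). Hence if β > M²(1-α)²/4, choosing η appropriately gives B(w,w) ≥ C_s·(|||w|||²_T + p(w)) for some C_s > 0. -/
import Mathlib


/-- Abstract coercivity of the stabilized hp-DG bilinear form (Lemma 3.2). -/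
theorem stmt_6 {V : Type*} [AddCommGroup V] [Module ℝ V]
    (A J P : V →ₗ[ℝ] V →ₗ[ℝ] ℝ)
    (NT : V → ℝ) (p : V → ℝ) (M α β : ℝ) (hM : 0 ≤ M) (hβ : 0 < β)
    (hp0 : ∀ w : V, 0 ≤ p w)
    (hphom : ∀ (c : ℝ) (w : V), p (c • w) = c ^ 2 * p w)
    (hAT : ∀ w : V, A w w = (NT w) ^ 2)
    (hP : ∀ w : V, β * p w ≤ P w w)
    (hJ : ∀ w v : V, |J w v| ≤ M * NT w * Real.sqrt (p v))
    (B : V → V → ℝ)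
    (hB : ∀ w v : V, B w v = A w v - J w v + α * J v w + P w v) :
    (∀ (η : ℝ), 0 < η → ∀ w : V,
        (1 - M * |1 - α| * η / 2) * (NT w) ^ 2
          + (β - M * |1 - α| / (2 * η)) * p w ≤ B w w) ∧
      (β > M ^ 2 * (1 - α) ^ 2 / 4 →
        ∃ Cs : ℝ, 0 < Cs ∧ ∀ w : V, Cs * ((NT w) ^ 2 + p w) ≤ B w w) := by
  set c : ℝ := M * |1 - α| with hc
  have hc0 : 0 ≤ c := mul_nonneg hM (abs_nonneg _)
  have main : ∀ (η : ℝ), 0 < η → ∀ w : V,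
      (1 - c * η / 2) * (NT w) ^ 2 + (β - c / (2 * η)) * p w ≤ B w w := by
    intro η hη w
    have hJw := hJ w w
    have hs : Real.sqrt (p w) ^ 2 = p w := Real.sq_sqrt (hp0 w)
    have hs0 : 0 ≤ Real.sqrt (p w) := Real.sqrt_nonneg _
    have hPw := hP w
    have hBw : B w w = (NT w) ^ 2 - J w w + α * J w w + P w w := by
      rw [hB w w, hAT w]
    -- bound on (α - 1) * J w w
    have h1 : |(1 - α) * J w w| ≤ c * (NT w * Real.sqrt (p w)) := by
      rw [abs_mul]
      calc |1 - α| * |J w w| ≤ |1 - α| * (M * NT w * Real.sqrt (p w)) := by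
            exact mul_le_mul_of_nonneg_left hJw (abs_nonneg _)
        _ = c * (NT w * Real.sqrt (p w)) := by ring
    have h2 : -(c * (NT w * Real.sqrt (p w))) ≤ (α - 1) * J w w := by
      have h4 := le_abs_self ((1 - α) * J w w)
      linarith [h1]
    have hamgm : c * (NT w * Real.sqrt (p w)) ≤ c * η / 2 * (NT w) ^ 2 + c / (2 * η) * p w := by
      have key : 0 ≤ (η * NT w - Real.sqrt (p w)) ^ 2 := sq_nonneg _
      have hcanc : c / (2 * η) * (2 * η) = c := div_mul_cancel₀ c (by positivity)
      have key2 : 2 * η * (c * (NT w * Real.sqrt (p w)))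
          ≤ 2 * η * (c * η / 2 * (NT w) ^ 2 + c / (2 * η) * p w) := by
        nlinarith [mul_nonneg hc0 key, hs]
      exact le_of_mul_le_mul_left key2 (by positivity)
    rw [hBw]
    nlinarith [h2, hamgm, hPw]
  refine ⟨main, ?_⟩
  intro hβ'
  have hcsq : c ^ 2 = M ^ 2 * (1 - α) ^ 2 := by
    rw [hc, mul_pow, sq_abs]
  have hβc : c ^ 2 / 4 < β := by rw [hcsq]; exact hβ'
  rcases eq_or_lt_of_le hc0 with h0 | hpos
  · -- c = 0
    refine ⟨min 1 β, lt_min one_pos hβ, fun w => ?_⟩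
    have := main 1 one_pos w
    rw [← h0] at this
    simp only [zero_mul, zero_div, sub_zero] at this
    have h1 : min 1 β * (NT w) ^ 2 ≤ 1 * (NT w) ^ 2 :=
      mul_le_mul_of_nonneg_right (min_le_left _ _) (sq_nonneg _)
    have h2 : min 1 β * p w ≤ β * p w :=
      mul_le_mul_of_nonneg_right (min_le_right _ _) (hp0 w)
    nlinarith [this]
  · -- c > 0
    set η : ℝ := (c / (2 * β) + 2 / c) / 2 with hη
    have hlt : c / (2 * β) < 2 / c := by
      rw [div_lt_div_iff₀ (by linarith) hpos]
      nlinarith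
    have hη1 : c / (2 * β) < η := by rw [hη]; linarith
    have hη2 : η < 2 / c := by rw [hη]; linarith
    have hηpos : 0 < η := lt_of_le_of_lt (by positivity) hη1
    have hco1 : 0 < 1 - c * η / 2 := by
      have : c * η < 2 := by
        have := (lt_div_iff₀ hpos).mp hη2
        linarith [mul_comm η c]
      linarith
    have hco2 : 0 < β - c / (2 * η) := by
      have : c / (2 * η) < β := by
        rw [div_lt_iff₀ (by positivity)]
        have := (div_lt_iff₀ (by positivity : (0:ℝ) < 2 * β)).mp hη1
        nlinarith
      linarith
    refine ⟨min (1 - c * η / 2) (β - c / (2 * η)), lt_min hco1 hco2, fun w => ?_⟩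
    have := main η hηpos w
    have h1 : min (1 - c * η / 2) (β - c / (2 * η)) * (NT w) ^ 2 ≤ (1 - c * η / 2) * (NT w) ^ 2 :=
      mul_le_mul_of_nonneg_right (min_le_left _ _) (sq_nonneg _)
    have h2 : min (1 - c * η / 2) (β - c / (2 * η)) * p w ≤ (β - c / (2 * η)) * p w :=
      mul_le_mul_of_nonneg_right (min_le_right _ _) (hp0 w)
    nlinarith [this]
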